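/- Let 𝒰 = {U_n}_{n≥1} be a countable open cover of a topological space X. There exists a partition of unity {p_n}_{n≥1} on X with p_n vanishing on X∖U_n for each n if and only if there exists a family of continuous functions f_n : X → [0,∞) with f_n vanishing on X∖U_n and ∑_{n≥1} f_n(x) > 0 for every x ∈ X. -/

import Mathlib

/-!
Truncating `f n` to `gₙ = min (f n) 2⁻ⁿ` keeps continuity, the zero sets and the positivity of the
sum, and makes the series converge uniformly. Its sum `S` is then continuous and positive, so the
quotients `gₙ / S` form the required partition of unity.
-/

open Set

theorem ENNReal.tsum_ofReal_pos_iff {ι : Type*} {f : ι → ℝ} :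
    0 < ∑' i, ENNReal.ofReal (f i) ↔ ∃ i, 0 < f i := by
  simp only [pos_iff_ne_zero, ne_eq, ENNReal.tsum_eq_zero, ENNReal.ofReal_eq_zero, not_forall,
    not_le]

theorem HasSum.exists_pos {ι : Type*} {f : ι → ℝ} {a : ℝ} (hf : HasSum f a) (ha : 0 < a) :
    ∃ i, 0 < f i := by
  by_contra! h
  exact ha.not_ge (hasSum_le h hf hasSum_zero)

section Normalize

variable {ι X : Type*} [TopologicalSpace X] {g : ι → X → ℝ}

theorem exists_hasSum_one_of_le_summable {u : ι → ℝ} (hg : ∀ i, Continuous (g i))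
    (hg0 : ∀ i x, 0 ≤ g i x) (hu : Summable u) (hgu : ∀ i x, g i x ≤ u i)
    (hpos : ∀ x, ∃ i, 0 < g i x) :
    ∃ p : ι → X → ℝ, (∀ i, Continuous (p i)) ∧ (∀ i x, p i x ∈ Icc (0 : ℝ) 1) ∧
      (∀ x, HasSum (fun i => p i x) 1) ∧ (∀ i x, g i x = 0 → p i x = 0) := by
  have hsum (x : X) : HasSum (fun i => g i x) (∑' i, g i x) :=
    (hu.of_nonneg_of_le (hg0 · x) (hgu · x)).hasSum
  have hS : Continuous fun x => ∑' i, g i x :=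
    continuous_tsum hg hu fun i x => by rw [Real.norm_of_nonneg (hg0 i x)]; exact hgu i x
  have hle (i : ι) (x : X) : g i x ≤ ∑' i, g i x := le_hasSum (hsum x) i fun j _ => hg0 j x
  have hSpos (x : X) : 0 < ∑' i, g i x := by
    obtain ⟨i, hi⟩ := hpos x
    exact hi.trans_le (hle i x)
  refine ⟨fun i x => g i x / ∑' j, g j x, fun i => (hg i).div hS fun x => (hSpos x).ne',
    fun i x => ⟨div_nonneg (hg0 i x) (hSpos x).le, (div_le_one (hSpos x)).2 (hle i x)⟩,
    fun x => ?_, fun i x hx => by simp [hx]⟩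
  simpa only [div_self (hSpos x).ne'] using (hsum x).div_const (∑' j, g j x)

end Normalize

theorem stmt_6_general {X : Type*} [TopologicalSpace X]
    (U : ℕ → Set X) :
    (∃ p : ℕ → X → ℝ,
      (∀ n, Continuous (p n)) ∧ (∀ n x, p n x ∈ Set.Icc (0 : ℝ) 1) ∧
      (∀ x, HasSum (fun n => p n x) 1) ∧
      (∀ n, ∀ x ∉ U n, p n x = 0)) ↔
    (∃ f : ℕ → X → ℝ,
      (∀ n, Continuous (f n)) ∧ (∀ n x, 0 ≤ f n x) ∧
      (∀ n, ∀ x ∉ U n, f n x = 0) ∧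
      (∀ x, 0 < ∑' n, ENNReal.ofReal (f n x))) := by
  constructor
  · rintro ⟨p, hp, hp01, hsum, hpU⟩
    exact ⟨p, hp, fun n x => (hp01 n x).1, hpU,
      fun x => ENNReal.tsum_ofReal_pos_iff.2 ((hsum x).exists_pos one_pos)⟩
  · rintro ⟨f, hf, hf0, hfU, hpos⟩
    obtain ⟨p, hp, hp01, hsum, hp0⟩ :=
      exists_hasSum_one_of_le_summable (g := fun n x => min (f n x) ((1 / 2 : ℝ) ^ n))
        (fun n => (hf n).min continuous_const) (fun n x => le_min (hf0 n x) (by positivity))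
        summable_geometric_two (fun n x => min_le_right _ _) fun x => by
          obtain ⟨n, hn⟩ := ENNReal.tsum_ofReal_pos_iff.1 (hpos x)
          exact ⟨n, lt_min hn (by positivity)⟩
    exact ⟨p, hp, hp01, hsum, fun n x hx => hp0 n x (by simp [hfU n x hx])⟩

theorem stmt_6 {X : Type*} [TopologicalSpace X]
    (U : ℕ → Set X) (hUo : ∀ n, IsOpen (U n)) (hUc : ∀ x, ∃ n, x ∈ U n) :
    (∃ p : ℕ → X → ℝ,
      (∀ n, Continuous (p n)) ∧ (∀ n x, p n x ∈ Set.Icc (0 : ℝ) 1) ∧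
      (∀ x, HasSum (fun n => p n x) 1) ∧
      (∀ n, ∀ x ∉ U n, p n x = 0)) ↔
    (∃ f : ℕ → X → ℝ,
      (∀ n, Continuous (f n)) ∧ (∀ n x, 0 ≤ f n x) ∧
      (∀ n, ∀ x ∉ U n, f n x = 0) ∧
      (∀ x, 0 < ∑' n, ENNReal.ofReal (f n x))) :=
  stmt_6_general U
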